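/- Let f : ℝ → [0,∞) be Lipschitz, even, supported in [−ρ₀,ρ₀], and nonincreasing on [0,∞). For a set E ⊆ ℝ^d of class C² with compact boundary, with signed distance function d_E (negative inside E, positive outside), one has ∫_{ℝ^d} f(d_E(x)) dx = ∫_0^{ρ₀} (−2s f'(s)) M_s(E) ds, where M_s(E) = (1/(2s)) |{x : dist(x,E) ≤ s, dist(x, E^c) ≤ s}|. -/

import Mathlib

open MeasureTheory Metric Set Filter
open scoped ENNReal NNReal

/-- The signed distance to `∂E`, negative inside `E` and positive outside. -/
noncomputable def sdist {d : ℕ} (E : Set (EuclideanSpace ℝ (Fin d)))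
    (x : EuclideanSpace ℝ (Fin d)) : ℝ :=
  Metric.infDist x E - Metric.infDist x Eᶜ

/-- `M_s(E) = (1/(2s)) |{x : dist(x,E) ≤ s, dist(x,Eᶜ) ≤ s}|` (as a real number). -/
noncomputable def Ms {d : ℕ} (s : ℝ) (E : Set (EuclideanSpace ℝ (Fin d))) : ℝ :=
  (volume {x : EuclideanSpace ℝ (Fin d) |
      Metric.infDist x E ≤ s ∧ Metric.infDist x Eᶜ ≤ s}).toReal / (2 * s)


lemma slope_abs_le {f : ℝ → ℝ} {L : NNReal} (hf : LipschitzWith L f) {x y : ℝ} (h : y ≠ x) :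
    |slope f x y| ≤ L := by
  rw [slope_def_field, abs_div]
  rw [div_le_iff₀ (abs_pos.mpr (sub_ne_zero.mpr h))]
  have := hf.dist_le_mul y x
  simpa [Real.dist_eq] using this

lemma lipschitz_deriv_bound {f : ℝ → ℝ} {L : NNReal} (hf : LipschitzWith L f)
    {c x : ℝ} (h : HasDerivAt f c x) : |c| ≤ L := by
  have ht : Tendsto (slope f x) (nhdsWithin x {x}ᶜ) (nhds c) :=
    hasDerivAt_iff_tendsto_slope.mp h
  have ht2 : Tendsto (fun y => |slope f x y|) (nhdsWithin x {x}ᶜ) (nhds |c|) :=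
    ht.abs
  refine le_of_tendsto ht2 ?_
  filter_upwards [self_mem_nhdsWithin] with y hy
  exact slope_abs_le hf hy

/-- FTC for Lipschitz functions with a.e. derivative. -/
lemma ftc_lipschitz {f f' : ℝ → ℝ} {L : NNReal} (hf : LipschitzWith L f)
    (hf' : ∀ᵐ s : ℝ, HasDerivAt f (f' s) s) {a b : ℝ} (hab : a ≤ b) :
    ∫ t in Set.Ioc a b, f' t = f b - f a := by
  have hcont : Continuous f := hf.continuous
  set F : ℝ → ℝ := fun u => ∫ x in a..u, f x with hF
  have hFderiv : ∀ c : ℝ, HasDerivAt F (f c) c := fun c =>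
    intervalIntegral.integral_hasDerivAt_right (hcont.intervalIntegrable _ _)
      (hcont.stronglyMeasurableAtFilter _ _) hcont.continuousAt
  set h : ℕ → ℝ := fun n => 1 / (n + 1) with hh
  have hhpos : ∀ n, 0 < h n := fun n => by positivity
  have hh0 : Tendsto h atTop (nhds 0) := tendsto_one_div_add_atTop_nhds_zero_nat
  -- sequence c + h n tends to c within {c}ᶜ
  have hseq : ∀ c : ℝ, Tendsto (fun n => c + h n) atTop (nhdsWithin c {c}ᶜ) := by
    intro c
    apply tendsto_nhdsWithin_of_tendsto_nhds_of_eventually_within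
    · simpa using tendsto_const_nhds.add hh0
    · filter_upwards with n
      simp only [mem_compl_iff, mem_singleton_iff]
      have := hhpos n; intro hc; nlinarith [hc]
  have hslope : ∀ {g : ℝ → ℝ} {c g' : ℝ}, HasDerivAt g g' c →
      Tendsto (fun n => (g (c + h n) - g c) / h n) atTop (nhds g') := by
    intro g c g' hg
    have := (hasDerivAt_iff_tendsto_slope.mp hg).comp (hseq c)
    convert this using 2 with n
    rw [Function.comp_apply, slope_def_field]
    congr 1
    ring
  -- the difference quotients of the left-hand side
  have key : ∀ n, ∫ t in Set.Ioc a b, (f (t + h n) - f t) / h n =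
      (F (b + h n) - F b) / h n - (F (a + h n) - F a) / h n := by
    intro n
    have h1 : IntervalIntegrable f volume a b := hcont.intervalIntegrable _ _
    have h2 : IntervalIntegrable (fun t => f (t + h n)) volume a b :=
      (hcont.comp (by continuity)).intervalIntegrable _ _
    rw [← intervalIntegral.integral_of_le hab]
    rw [intervalIntegral.integral_div]
    rw [intervalIntegral.integral_sub h2 h1]
    rw [intervalIntegral.integral_comp_add_right f (h n)]
    have hFd : ∫ x in a + h n..b + h n, f x = F (b + h n) - F (a + h n) := by
      have e1 : (∫ x in a..(a + h n), f x) + ∫ x in (a + h n)..(b + h n), f x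
          = ∫ x in a..(b + h n), f x :=
        intervalIntegral.integral_add_adjacent_intervals (μ := volume) (hcont.intervalIntegrable _ _)
          (hcont.intervalIntegrable _ _)
      show ∫ x in (a + h n)..(b + h n), f x
          = (∫ x in a..(b + h n), f x) - ∫ x in a..(a + h n), f x
      linarith [e1]
    rw [hFd]
    have : F b - F a = ∫ x in a..b, f x := by
      simp [hF]
    rw [show (∫ x in a..b, f x) = F b - F a from this.symm]
    ring
  -- limit of RHS
  have hR : Tendsto (fun n => (F (b + h n) - F b) / h n - (F (a + h n) - F a) / h n)
      atTop (nhds (f b - f a)) :=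
    (hslope (hFderiv b)).sub (hslope (hFderiv a))
  -- limit of LHS by dominated convergence
  have hL : Tendsto (fun n => ∫ t in Set.Ioc a b, (f (t + h n) - f t) / h n)
      atTop (nhds (∫ t in Set.Ioc a b, f' t)) := by
    apply MeasureTheory.tendsto_integral_of_dominated_convergence (fun _ => (L : ℝ))
    · intro n
      exact ((hcont.comp (by continuity)).sub hcont |>.div_const _).aestronglyMeasurable
    · rw [MeasureTheory.integrable_const_iff]
      right
      exact ⟨by simp [measure_Ioc_lt_top]⟩
    · intro n
      filter_upwards with t
      rw [Real.norm_eq_abs, abs_div, abs_of_pos (hhpos n), div_le_iff₀ (hhpos n)]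
      have := hf.dist_le_mul (t + h n) t
      simp only [Real.dist_eq, add_sub_cancel_left] at this
      simpa [abs_of_pos (hhpos n)] using this
    · refine MeasureTheory.ae_restrict_of_ae ?_
      filter_upwards [hf'] with t ht
      exact hslope ht
  exact tendsto_nhds_unique (hL.congr key) hR


noncomputable def sdist' {V : Type*} [NormedAddCommGroup V] [NormedSpace ℝ V] (E : Set V)
    (x : V) : ℝ :=
  Metric.infDist x E - Metric.infDist x Eᶜ

lemma segment_inter_frontier {V : Type*} [NormedAddCommGroup V] [NormedSpace ℝ V]
    {E : Set V} {x y : V} (hx : x ∈ E) (hy : y ∈ Eᶜ) :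
    (segment ℝ x y ∩ frontier E).Nonempty := by
  by_contra hne
  rw [Set.not_nonempty_iff_eq_empty] at hne
  have hpre : IsPreconnected (segment ℝ x y) := (convex_segment x y).isPreconnected
  have hmem : ∀ z ∈ segment ℝ x y, z ∈ interior E ∪ interior Eᶜ := by
    intro z hz
    have hzf : z ∉ frontier E := fun h => (Set.eq_empty_iff_forall_notMem.mp hne z ⟨hz, h⟩)
    by_cases hcz : z ∈ closure E
    · left
      by_contra hint
      exact hzf ⟨hcz, hint⟩
    · right
      rw [interior_compl]
      exact hcz
  have hxu : x ∈ interior E := by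
    rcases hmem x (left_mem_segment ℝ x y) with h | h
    · exact h
    · exact absurd (interior_subset h) (by simpa using hx)
  have hyv : y ∈ interior Eᶜ := by
    rcases hmem y (right_mem_segment ℝ x y) with h | h
    · exact absurd (interior_subset h) (by simpa using hy)
    · exact h
  obtain ⟨z, hzs, hzu, hzv⟩ := hpre (interior E) (interior Eᶜ) isOpen_interior isOpen_interior
    hmem ⟨x, left_mem_segment ℝ x y, hxu⟩ ⟨y, right_mem_segment ℝ x y, hyv⟩
  exact (interior_subset hzv) (interior_subset hzu)

lemma infDist_frontier_le_infDist_compl {V : Type*} [NormedAddCommGroup V] [NormedSpace ℝ V]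
    {E : Set V} {x : V} (hx : x ∈ E) :
    Metric.infDist x (frontier E) ≤ Metric.infDist x Eᶜ := by
  rcases eq_empty_or_nonempty Eᶜ with h | h
  · have hE : E = univ := by
      rw [← compl_compl E, h, compl_empty]
    simp [hE, h, Metric.infDist_empty]
  · haveI : Nonempty ↥(Eᶜ) := h.to_subtype
    conv_rhs => rw [Metric.infDist_eq_iInf]
    refine le_ciInf fun y => ?_
    obtain ⟨z, hzs, hzf⟩ := segment_inter_frontier hx y.2
    have h1 : Metric.infDist x (frontier E) ≤ dist x z := Metric.infDist_le_dist_of_mem hzf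
    have h2 : dist x z ≤ dist x (y : V) := by
      have hsub : segment ℝ x (y : V) ⊆ closedBall x (dist x (y : V)) :=
        (convex_closedBall x (dist x (y : V))).segment_subset
          (mem_closedBall_self dist_nonneg)
          (by rw [mem_closedBall, dist_comm])
      have := hsub hzs
      rwa [mem_closedBall, dist_comm] at this
    linarith

lemma abs_sdist' {V : Type*} [NormedAddCommGroup V] [NormedSpace ℝ V] (E : Set V) (x : V) :
    |sdist' E x| = max (Metric.infDist x E) (Metric.infDist x Eᶜ) := by
  by_cases hx : x ∈ closure E
  · have h1 : Metric.infDist x E = 0 := Metric.infDist_zero_of_mem_closure hx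
    rw [sdist', h1, zero_sub, abs_neg, abs_of_nonneg Metric.infDist_nonneg,
      max_eq_right Metric.infDist_nonneg]
  · have hxc : x ∈ Eᶜ := by
      intro hmem
      exact hx (subset_closure hmem)
    have h1 : Metric.infDist x Eᶜ = 0 := Metric.infDist_zero_of_mem hxc
    rw [sdist', h1, sub_zero, abs_of_nonneg Metric.infDist_nonneg,
      max_eq_left (h1 ▸ Metric.infDist_nonneg)]

lemma infDist_frontier_le_abs_sdist' {V : Type*} [NormedAddCommGroup V] [NormedSpace ℝ V]
    (E : Set V) (x : V) :
    Metric.infDist x (frontier E) ≤ |sdist' E x| := by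
  rw [abs_sdist']
  by_cases hx : x ∈ closure E
  · have h1 : Metric.infDist x E = 0 := Metric.infDist_zero_of_mem_closure hx
    rw [h1, max_eq_right Metric.infDist_nonneg]
    by_cases hxE : x ∈ E
    · exact infDist_frontier_le_infDist_compl hxE
    · have hfr : x ∈ frontier E := by
        rw [frontier_eq_closure_inter_closure]
        exact ⟨hx, subset_closure hxE⟩
      rw [Metric.infDist_zero_of_mem hfr]
      exact Metric.infDist_nonneg
  · have hxc : x ∈ Eᶜ := fun hmem => hx (subset_closure hmem)
    have h1 : Metric.infDist x Eᶜ = 0 := Metric.infDist_zero_of_mem hxc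
    rw [h1, max_eq_left Metric.infDist_nonneg]
    have := infDist_frontier_le_infDist_compl (E := Eᶜ) hxc
    rwa [frontier_compl, compl_compl] at this

lemma abs_sdist {d : ℕ} (E : Set (EuclideanSpace ℝ (Fin d))) (x : EuclideanSpace ℝ (Fin d)) :
    |sdist E x| = max (Metric.infDist x E) (Metric.infDist x Eᶜ) :=
  abs_sdist' E x

lemma infDist_frontier_le_abs_sdist {d : ℕ} (E : Set (EuclideanSpace ℝ (Fin d)))
    (x : EuclideanSpace ℝ (Fin d)) :
    Metric.infDist x (frontier E) ≤ |sdist E x| :=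
  infDist_frontier_le_abs_sdist' E x

lemma main_core {d : ℕ} (ρ₀ : ℝ) (hρ₀ : 0 < ρ₀)
    (f f' : ℝ → ℝ) (L : NNReal) (hflip : LipschitzWith L f)
    (hfpos : ∀ x, 0 ≤ f x) (hfeven : ∀ x, f (-x) = f x)
    (hfsupp : ∀ x, ρ₀ ≤ |x| → f x = 0)
    (hfmono : AntitoneOn f (Set.Ici 0))
    (hf' : ∀ᵐ s : ℝ, HasDerivAt f (f' s) s)
    (E : Set (EuclideanSpace ℝ (Fin d)))
    (hfin : volume {x : EuclideanSpace ℝ (Fin d) | |sdist E x| ≤ ρ₀} ≠ ⊤) :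
    ∫ x, f (sdist E x) = ∫ s in (0:ℝ)..ρ₀, (-2 * s * f' s) * Ms s E := by
  have hsd_cont : Continuous (sdist E) :=
    (Metric.continuous_infDist_pt E).sub (Metric.continuous_infDist_pt Eᶜ)
  have habs : ∀ x, f (sdist E x) = f |sdist E x| := by
    intro x
    rcases abs_cases (sdist E x) with ⟨h, _⟩ | ⟨h, _⟩
    · rw [h]
    · rw [h, hfeven]
  set φ : ℝ → ℝ≥0∞ := fun t => volume {x : EuclideanSpace ℝ (Fin d) | |sdist E x| ≤ t} with hφ
  have hφmono : Monotone φ := fun s t hst =>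
    measure_mono (fun x hx => le_trans hx hst)
  have hφfin : ∀ t ≤ ρ₀, φ t ≠ ⊤ := fun t ht =>
    ne_top_of_le_ne_top hfin (hφmono ht)
  have hSmeas : ∀ t : ℝ, MeasurableSet {x : EuclideanSpace ℝ (Fin d) | |sdist E x| ≤ t} :=
    fun t => (isClosed_le (hsd_cont.abs) continuous_const).measurableSet
  have hf'm : AEMeasurable f' (volume : Measure ℝ) := by
    refine (measurable_deriv f).aemeasurable.congr ?_
    filter_upwards [hf'] with s hs
    exact hs.deriv
  have hbound : ∀ᵐ s : ℝ, |f' s| ≤ L := by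
    filter_upwards [hf'] with s hs
    exact lipschitz_deriv_bound hflip hs
  have hnonpos : ∀ᵐ s : ℝ, 0 < s → 0 ≤ -f' s := by
    filter_upwards [hf'] with s hs hpos
    rw [neg_nonneg]
    have ht : Tendsto (slope f s) (nhdsWithin s (Set.Ioi s)) (nhds (f' s)) :=
      (hasDerivAt_iff_tendsto_slope.mp hs).mono_left
        (nhdsWithin_mono s (fun y hy => ne_of_gt hy))
    refine le_of_tendsto ht ?_
    filter_upwards [self_mem_nhdsWithin] with y hy
    rw [slope_def_field]
    apply div_nonpos_of_nonpos_of_nonneg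
    · rw [sub_nonpos]
      exact hfmono (le_of_lt hpos) (le_of_lt (lt_trans hpos hy)) (le_of_lt hy)
    · rw [sub_nonneg]; exact le_of_lt hy
  have hfρ₀ : f ρ₀ = 0 := hfsupp ρ₀ (by rw [abs_of_pos hρ₀])
  have hintf' : ∀ u : ℝ, IntegrableOn (fun t => -f' t) (Set.Ioc u ρ₀) volume := by
    intro u
    have hc : IntegrableOn (fun _ : ℝ => (L : ℝ)) (Set.Ioc u ρ₀) volume :=
      integrableOn_const measure_Ioc_lt_top.ne
    refine Integrable.mono' hc ((hf'm.neg).aestronglyMeasurable.restrict) ?_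
    refine ae_restrict_of_ae ?_
    filter_upwards [hbound] with t ht
    rwa [norm_neg, Real.norm_eq_abs]
  have hfι : ∀ u : ℝ, 0 ≤ u → f u = ∫ t in Set.Ioc u ρ₀, -f' t := by
    intro u hu
    by_cases h : u ≤ ρ₀
    · have := ftc_lipschitz hflip hf' h
      rw [integral_neg, this, hfρ₀]
      ring
    · rw [Set.Ioc_eq_empty (by intro hlt; exact h (le_of_lt hlt)), Measure.restrict_empty,
        integral_zero_measure]
      exact hfsupp u (by rw [abs_of_nonneg hu]; linarith)
  -- Claim 1
  have claim1 : ∀ x, ENNReal.ofReal (f (sdist E x)) =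
      ∫⁻ t in Set.Ioc 0 ρ₀, (if |sdist E x| ≤ t then ENNReal.ofReal (-f' t) else 0) := by
    intro x
    set u := |sdist E x| with hu
    have hu0 : 0 ≤ u := abs_nonneg _
    have e1 : (fun t => if u ≤ t then ENNReal.ofReal (-f' t) else 0) =
        Set.indicator (Set.Ici u) (fun t => ENNReal.ofReal (-f' t)) := by
      funext t
      rw [Set.indicator_apply]
      simp [Set.mem_Ici]
    rw [habs x, ← hu]
    rw [show (fun t => if u ≤ t then ENNReal.ofReal (-f' t) else 0) =
        Set.indicator (Set.Ici u) (fun t => ENNReal.ofReal (-f' t)) from e1]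
    rw [lintegral_indicator measurableSet_Ici]
    rw [Measure.restrict_restrict measurableSet_Ici]
    have hsetae : (Set.Ici u ∩ Set.Ioc 0 ρ₀ : Set ℝ) =ᵐ[volume] Set.Ioc u ρ₀ := by
      rw [MeasureTheory.ae_eq_set]
      constructor
      · refine measure_mono_null (fun t ht => ?_) (Real.volume_singleton (a := u))
        rcases ht with ⟨⟨hut, h0t, htρ⟩, hn⟩
        rw [Set.mem_singleton_iff]
        by_contra hne
        exact hn ⟨lt_of_le_of_ne hut (Ne.symm hne), htρ⟩
      · refine measure_mono_null (fun t ht => ?_) (Real.volume_singleton (a := u))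
        rcases ht with ⟨⟨hut, htρ⟩, hn⟩
        exact absurd ⟨le_of_lt hut, lt_of_le_of_lt hu0 hut, htρ⟩ hn
    rw [Measure.restrict_congr_set hsetae]
    have hnn : 0 ≤ᵐ[volume.restrict (Set.Ioc u ρ₀)] fun t => -f' t := by
      refine (ae_restrict_iff' measurableSet_Ioc).mpr ?_
      filter_upwards [hnonpos] with s hsn hs
      exact hsn (lt_of_le_of_lt hu0 hs.1)
    rw [← MeasureTheory.ofReal_integral_eq_lintegral_ofReal (hintf' u) hnn]
    rw [← hfι u hu0]
  -- left-hand side as a lintegral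
  have lhs_eq : ∫ x, f (sdist E x)
      = (∫⁻ x, ENNReal.ofReal (f (sdist E x))).toReal :=
    integral_eq_lintegral_of_nonneg_ae (Filter.Eventually.of_forall fun x => hfpos _)
      (hflip.continuous.comp hsd_cont).aestronglyMeasurable
  -- swap the order of integration
  have hswap : ∫⁻ x, ENNReal.ofReal (f (sdist E x))
      = ∫⁻ t in Set.Ioc 0 ρ₀, ENNReal.ofReal (-f' t) * φ t := by
    have hA : MeasurableSet {p : (EuclideanSpace ℝ (Fin d)) × ℝ | |sdist E p.1| ≤ p.2} :=
      (isClosed_le ((hsd_cont.comp continuous_fst).abs) continuous_snd).measurableSet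
    have hg : AEMeasurable (fun p : EuclideanSpace ℝ (Fin d) × ℝ => ENNReal.ofReal (-f' p.2))
        (volume.prod (volume.restrict (Set.Ioc 0 ρ₀))) := by
      have h1 : AEMeasurable f' (volume.restrict (Set.Ioc 0 ρ₀)) := hf'm.restrict
      have h2 : AEMeasurable (fun p : EuclideanSpace ℝ (Fin d) × ℝ => f' p.2)
          (volume.prod (volume.restrict (Set.Ioc 0 ρ₀))) :=
        h1.comp_quasiMeasurePreserving MeasureTheory.Measure.quasiMeasurePreserving_snd
      exact ENNReal.measurable_ofReal.comp_aemeasurable h2.neg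
    have huncurry : AEMeasurable
        (Function.uncurry fun (x : EuclideanSpace ℝ (Fin d)) (t : ℝ) =>
          if |sdist E x| ≤ t then ENNReal.ofReal (-f' t) else 0)
        (volume.prod (volume.restrict (Set.Ioc 0 ρ₀))) := by
      have heq : (Function.uncurry fun (x : EuclideanSpace ℝ (Fin d)) (t : ℝ) =>
          if |sdist E x| ≤ t then ENNReal.ofReal (-f' t) else 0)
          = Set.indicator {p : (EuclideanSpace ℝ (Fin d)) × ℝ | |sdist E p.1| ≤ p.2}
            (fun p => ENNReal.ofReal (-f' p.2)) := by
        funext p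
        rw [Set.indicator_apply]
        rfl
      rw [heq]
      exact hg.indicator hA
    calc ∫⁻ x, ENNReal.ofReal (f (sdist E x))
        = ∫⁻ x, ∫⁻ t in Set.Ioc 0 ρ₀,
            (if |sdist E x| ≤ t then ENNReal.ofReal (-f' t) else 0) :=
          lintegral_congr claim1
      _ = ∫⁻ t in Set.Ioc 0 ρ₀, ∫⁻ x,
            (if |sdist E x| ≤ t then ENNReal.ofReal (-f' t) else 0) :=
          (MeasureTheory.lintegral_lintegral_swap huncurry)
      _ = ∫⁻ t in Set.Ioc 0 ρ₀, ENNReal.ofReal (-f' t) * φ t := by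
          refine lintegral_congr fun t => ?_
          have heq2 : (fun x : EuclideanSpace ℝ (Fin d) =>
              if |sdist E x| ≤ t then ENNReal.ofReal (-f' t) else 0)
              = Set.indicator {x : EuclideanSpace ℝ (Fin d) | |sdist E x| ≤ t}
                (fun _ => ENNReal.ofReal (-f' t)) := by
            funext x
            rw [Set.indicator_apply]
            rfl
          rw [heq2, lintegral_indicator_const (hSmeas t)]
  -- right-hand side
  have rhs_eq : ∫ s in (0:ℝ)..ρ₀, (-2 * s * f' s) * Ms s E
      = (∫⁻ t in Set.Ioc 0 ρ₀, ENNReal.ofReal (-f' t) * φ t).toReal := by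
    rw [intervalIntegral.integral_of_le (le_of_lt hρ₀)]
    have hMs : Set.EqOn (fun s => (-2 * s * f' s) * Ms s E)
        (fun s => (-f' s) * (φ s).toReal) (Set.Ioc 0 ρ₀) := by
      intro s hs
      have hset : {x : EuclideanSpace ℝ (Fin d) |
          Metric.infDist x E ≤ s ∧ Metric.infDist x Eᶜ ≤ s} = {x | |sdist E x| ≤ s} := by
        ext x
        rw [Set.mem_setOf_eq, Set.mem_setOf_eq, abs_sdist, max_le_iff]
      show (-2 * s * f' s) * Ms s E = (-f' s) * (φ s).toReal
      rw [Ms, hset]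
      have hs0 : s ≠ 0 := ne_of_gt hs.1
      have : φ s = volume {x : EuclideanSpace ℝ (Fin d) | |sdist E x| ≤ s} := rfl
      rw [← this]
      field_simp
    rw [setIntegral_congr_fun measurableSet_Ioc hMs]
    have hφmeas : Measurable fun s : ℝ => (φ s).toReal :=
      ENNReal.measurable_toReal.comp hφmono.measurable
    have hnn : 0 ≤ᵐ[volume.restrict (Set.Ioc 0 ρ₀)] fun s => (-f' s) * (φ s).toReal := by
      refine (ae_restrict_iff' measurableSet_Ioc).mpr ?_
      filter_upwards [hnonpos] with s hsn hs
      exact mul_nonneg (hsn hs.1) ENNReal.toReal_nonneg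
    have hm : AEStronglyMeasurable (fun s => (-f' s) * (φ s).toReal)
        (volume.restrict (Set.Ioc 0 ρ₀)) :=
      ((hf'm.restrict.neg).mul hφmeas.aemeasurable.restrict).aestronglyMeasurable
    rw [integral_eq_lintegral_of_nonneg_ae hnn hm]
    congr 1
    refine lintegral_congr_ae ?_
    refine (ae_restrict_iff' measurableSet_Ioc).mpr ?_
    filter_upwards [hnonpos] with s hsn hs
    rw [ENNReal.ofReal_mul (hsn hs.1), ENNReal.ofReal_toReal (hφfin s hs.2)]
  rw [lhs_eq, hswap, rhs_eq]

/-- For `f` Lipschitz, even, supported in `[-ρ₀,ρ₀]`, nonincreasing on `[0,∞)`, and `E` a set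
with compact `C²` boundary (regularity expressed by the signed distance being `C²` near `∂E`),
`∫ f(d_E) dx = ∫_0^{ρ₀} (-2s f'(s)) M_s(E) ds`. -/
theorem stmt8 {d : ℕ} (ρ₀ : ℝ) (hρ₀ : 0 < ρ₀)
    (f f' : ℝ → ℝ) (L : NNReal) (hflip : LipschitzWith L f)
    (hfpos : ∀ x, 0 ≤ f x) (hfeven : ∀ x, f (-x) = f x)
    (hfsupp : ∀ x, ρ₀ ≤ |x| → f x = 0)
    (hfmono : AntitoneOn f (Set.Ici 0))
    (hf' : ∀ᵐ s : ℝ, HasDerivAt f (f' s) s)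
    (E : Set (EuclideanSpace ℝ (Fin d)))
    (hbd : IsCompact (frontier E))
    (hreg : ∃ U : Set (EuclideanSpace ℝ (Fin d)),
      IsOpen U ∧ frontier E ⊆ U ∧ ContDiffOn ℝ 2 (sdist E) U) :
    ∫ x, f (sdist E x) = ∫ s in (0:ℝ)..ρ₀, (-2 * s * f' s) * Ms s E := by
  by_cases hfe : frontier E = ∅
  · have hclopen : IsClopen E := isClopen_iff_frontier_eq_empty.mpr hfe
    have hEor : E = ∅ ∨ E = univ := isClopen_iff.mp hclopen
    have hd0 : ∀ F : Set (EuclideanSpace ℝ (Fin d)), (F = ∅ ∨ F = univ) →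
        ∀ x, Metric.infDist x F = 0 := by
      rintro F (rfl | rfl) x
      · exact Metric.infDist_empty
      · exact Metric.infDist_zero_of_mem (mem_univ x)
    have hEor' : Eᶜ = ∅ ∨ Eᶜ = univ := by
      rcases hEor with rfl | rfl
      · right; exact compl_empty
      · left; exact compl_univ
    have hsd0 : ∀ x, sdist E x = 0 := by
      intro x
      rw [sdist, hd0 E hEor x, hd0 Eᶜ hEor' x, sub_zero]
    by_cases hvol : volume (univ : Set (EuclideanSpace ℝ (Fin d))) = ⊤
    · have hL : ∫ x, f (sdist E x) = 0 := by
        simp only [hsd0]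
        rw [integral_const]
        simp [hvol, measureReal_def]
      rw [hL, intervalIntegral.integral_of_le hρ₀.le]
      symm
      have h0 : Set.EqOn (fun s => (-2 * s * f' s) * Ms s E) (fun _ => (0:ℝ))
          (Set.Ioc 0 ρ₀) := by
        intro s hs
        have hset : {x : EuclideanSpace ℝ (Fin d) |
            Metric.infDist x E ≤ s ∧ Metric.infDist x Eᶜ ≤ s} = univ := by
          ext x
          simp [hd0 E hEor x, hd0 Eᶜ hEor' x, le_of_lt hs.1]
        show (-2 * s * f' s) * Ms s E = 0
        rw [Ms, hset, hvol]
        simp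
      rw [setIntegral_congr_fun measurableSet_Ioc h0]
      simp
    · refine main_core ρ₀ hρ₀ f f' L hflip hfpos hfeven hfsupp hfmono hf' E ?_
      exact ne_top_of_le_ne_top hvol (measure_mono (subset_univ _))
  · have hne : (frontier E).Nonempty := Set.nonempty_iff_ne_empty.mpr hfe
    refine main_core ρ₀ hρ₀ f f' L hflip hfpos hfeven hfsupp hfmono hf' E ?_
    have hsub : {x : EuclideanSpace ℝ (Fin d) | |sdist E x| ≤ ρ₀}
        ⊆ cthickening ρ₀ (frontier E) := by
      intro x hx
      rw [Metric.mem_cthickening_iff]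
      have h1 : Metric.infDist x (frontier E) ≤ ρ₀ :=
        le_trans (infDist_frontier_le_abs_sdist E x) hx
      rw [← ENNReal.ofReal_toReal (Metric.infEdist_ne_top hne)]
      exact ENNReal.ofReal_le_ofReal h1
    exact ne_top_of_le_ne_top (hbd.cthickening.measure_lt_top.ne) (measure_mono hsub)
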